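/- Let k ≥ 0. The sequence 𝒫_{k+1} →∇→ 𝐏_k ⊕ 𝐱×𝒫̃_k →∇×→ 𝒫_k on ℝ² is exact: (i) the kernel of ∇ on 𝒫_{k+1} consists exactly of the constants; (ii) ∇𝒫_{k+1} = {v ∈ 𝐏_k ⊕ 𝐱×𝒫̃_k : ∇×v = 0}; (iii) ∇× maps 𝐏_k ⊕ 𝐱×𝒫̃_k onto 𝒫_k. Here 𝐏_k ⊕ 𝐱×𝒫̃_k = {w + (y p, −x p) : w ∈ 𝐏_k, p ∈ 𝒫̃_k}. -/

import Mathlib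

open MvPolynomial

/-- Polynomials on `ℝ²`. -/
abbrev R2 := MvPolynomial (Fin 2) ℝ

/-- The gradient `∇p = (∂ₓ p, ∂_y p)`. -/
noncomputable def grad2 (p : R2) : R2 × R2 := (pderiv 0 p, pderiv 1 p)

/-- The scalar curl `∇×(v₁,v₂) = -∂_y v₁ + ∂ₓ v₂`. -/
noncomputable def curl2 (v : R2 × R2) : R2 := - pderiv 1 v.1 + pderiv 0 v.2

/-- Membership in the two-dimensional Nédélec-type space
`𝐏_k ⊕ 𝐱×𝒫̃_k = {w + (y p, −x p) : w ∈ 𝐏_k, p ∈ 𝒫̃_k}`. -/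
def memNed2 (k : ℕ) (v : R2 × R2) : Prop :=
  ∃ w₁ w₂ p : R2, w₁.totalDegree ≤ k ∧ w₂.totalDegree ≤ k ∧
    p.IsHomogeneous k ∧ v = (w₁ + X 1 * p, w₂ - X 0 * p)

lemma coeff_pderiv' (i : Fin 2) (d : Fin 2 →₀ ℕ) (p : R2) :
    coeff d (pderiv i p) = ((d i : ℝ) + 1) * coeff (d + Finsupp.single i 1) p := by
  induction p using MvPolynomial.induction_on' with
  | add p q hp hq => simp [hp, hq, mul_add]
  | monomial s a =>
    rw [pderiv_monomial, coeff_monomial, coeff_monomial]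
    by_cases h2 : s = d + Finsupp.single i 1
    · have hsi : s i = d i + 1 := by subst h2; simp
      rw [if_pos, if_pos h2, hsi]
      · push_cast; ring
      · subst h2; simp
    · rw [if_neg h2]
      by_cases h1 : s - Finsupp.single i 1 = d
      · rw [if_pos h1]
        have hsi : s i = 0 := by
          by_contra hsi
          apply h2
          rw [← h1, tsub_add_cancel_of_le]
          rwa [Finsupp.single_le_iff, Nat.one_le_iff_ne_zero]
        simp [hsi]
      · simp [if_neg h1]

lemma sum_add_single (d : Fin 2 →₀ ℕ) (i : Fin 2) :
    (d + Finsupp.single i 1).sum (fun _ n => n) = d.sum (fun _ n => n) + 1 := by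
  rw [Finsupp.sum_add_index (by simp) (by simp), Finsupp.sum_single_index rfl]

lemma totalDegree_pderiv_le (i : Fin 2) (p : R2) (n : ℕ) (h : p.totalDegree ≤ n + 1) :
    (pderiv i p).totalDegree ≤ n := by
  apply Finset.sup_le
  intro d hd
  rw [mem_support_iff, coeff_pderiv'] at hd
  have hc : coeff (d + Finsupp.single i 1) p ≠ 0 := by
    intro h0; rw [h0, mul_zero] at hd; exact hd rfl
  have := le_totalDegree (p := p) (mem_support_iff.mpr hc)
  rw [sum_add_single] at this
  omega

lemma grad_zero_const (p : R2) (h0 : pderiv 0 p = 0) (h1 : pderiv 1 p = 0) :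
    p = C (coeff 0 p) := by
  ext d
  by_cases hd : d = 0
  · simp [hd]
  · rw [coeff_C, if_neg (Ne.symm hd)]
    obtain ⟨i, hi⟩ : ∃ i, d i ≠ 0 := by
      by_contra h
      push_neg at h
      exact hd (Finsupp.ext fun i => h i)
    have hz : pderiv i p = 0 := by fin_cases i <;> assumption
    have := congrArg (coeff (d - Finsupp.single i 1)) hz
    rw [coeff_pderiv', tsub_add_cancel_of_le
      (by rwa [Finsupp.single_le_iff, Nat.one_le_iff_ne_zero]), coeff_zero] at this
    rcases mul_eq_zero.mp this with h' | h'
    · exact absurd h' (by positivity)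
    · exact h'

noncomputable def integ (i : Fin 2) (q : R2) : R2 :=
  ∑ d ∈ q.support, monomial (d + Finsupp.single i 1) (coeff d q / (d i + 1))

lemma pderiv_integ (i : Fin 2) (q : R2) : pderiv i (integ i q) = q := by
  rw [integ, map_sum]
  conv_rhs => rw [← q.support_sum_monomial_coeff]
  apply Finset.sum_congr rfl
  intro d _
  rw [pderiv_monomial, add_tsub_cancel_right]
  congr 1
  have h1 : (d + Finsupp.single i 1 : Fin 2 →₀ ℕ) i = d i + 1 := by simp
  rw [h1]
  have : (d i : ℝ) + 1 ≠ 0 := by positivity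
  push_cast
  field_simp

lemma totalDegree_integ_le (i : Fin 2) (q : R2) (n : ℕ) (h : q.totalDegree ≤ n) :
    (integ i q).totalDegree ≤ n + 1 := by
  refine (totalDegree_finset_sum _ _).trans (Finset.sup_le fun d hd => ?_)
  refine (totalDegree_monomial_le _ _).trans ?_
  simp only [Function.id_def]
  rw [sum_add_single]
  have := le_totalDegree (p := q) hd
  omega

lemma pderiv_integ_other (q : R2) (h : pderiv 0 q = 0) : pderiv 0 (integ 1 q) = 0 := by
  rw [integ, map_sum]
  apply Finset.sum_eq_zero
  intro d hd
  have hd0 : d 0 = 0 := by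
    by_contra h0
    have := congrArg (coeff (d - Finsupp.single 0 1)) h
    rw [coeff_pderiv', tsub_add_cancel_of_le
      (by rwa [Finsupp.single_le_iff, Nat.one_le_iff_ne_zero]), coeff_zero] at this
    rcases mul_eq_zero.mp this with h' | h'
    · exact absurd h' (by positivity)
    · exact (mem_support_iff.mp hd) h'
  rw [pderiv_monomial]
  have : (d + Finsupp.single 1 1 : Fin 2 →₀ ℕ) 0 = 0 := by
    simp [Finsupp.single_apply, hd0]
  simp [this]

lemma pderiv_comm' (p : R2) : pderiv 0 (pderiv 1 p) = pderiv 1 (pderiv 0 p) := by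
  ext d
  rw [coeff_pderiv', coeff_pderiv', coeff_pderiv', coeff_pderiv']
  have e1 : (d + Finsupp.single 0 1 : Fin 2 →₀ ℕ) 1 = d 1 := by simp [Finsupp.single_apply]
  have e2 : (d + Finsupp.single 1 1 : Fin 2 →₀ ℕ) 0 = d 0 := by simp [Finsupp.single_apply]
  rw [e1, e2, add_right_comm]
  ring

lemma coeff_X_mul_pderiv (i : Fin 2) (d : Fin 2 →₀ ℕ) (p : R2) :
    coeff d (X i * pderiv i p) = (d i : ℝ) * coeff d p := by
  classical
  rw [coeff_X_mul' d i]
  by_cases h : i ∈ d.support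
  · rw [if_pos h, coeff_pderiv', tsub_add_cancel_of_le
      (by rw [Finsupp.single_le_iff, Nat.one_le_iff_ne_zero]; exact Finsupp.mem_support_iff.mp h)]
    have : (d - Finsupp.single i 1 : Fin 2 →₀ ℕ) i = d i - 1 := by simp
    rw [this]
    have hne := Finsupp.mem_support_iff.mp h
    have : ((d i - 1 : ℕ) : ℝ) + 1 = (d i : ℝ) := by
      have : 1 ≤ d i := Nat.one_le_iff_ne_zero.mpr hne
      push_cast [this]
      ring
    rw [this]
  · rw [if_neg h]
    have : d i = 0 := Finsupp.notMem_support_iff.mp h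
    rw [this]
    simp

lemma degree_two (d : Fin 2 →₀ ℕ) : d.degree = d 0 + d 1 := by
  rw [Finsupp.degree_apply]
  rw [Finset.sum_subset (Finset.subset_univ d.support)
    (fun x _ hx => Finsupp.notMem_support_iff.mp hx)]
  simp [Fin.sum_univ_two]

lemma euler (p : R2) (n : ℕ) (h : p.IsHomogeneous n) :
    X 0 * pderiv 0 p + X 1 * pderiv 1 p = C (n : ℝ) * p := by
  ext d
  rw [coeff_add, coeff_X_mul_pderiv, coeff_X_mul_pderiv, coeff_C_mul]
  by_cases hc : coeff d p = 0
  · rw [hc]; ring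
  · have hd : d.degree = n := by
      by_contra hne
      exact hc (h.coeff_eq_zero hne)
    rw [degree_two] at hd
    rw [← hd]
    push_cast
    ring
lemma curl_cross (p : R2) (n : ℕ) (h : p.IsHomogeneous n) :
    curl2 (X 1 * p, -(X 0 * p)) = -(C ((n : ℝ) + 2) * p) := by
  have he := euler p n h
  unfold curl2
  simp only [pderiv_mul, pderiv_X_self, map_neg, pderiv_X_of_ne (by decide : (0:Fin 2) ≠ 1),
    pderiv_X_of_ne (by decide : (1:Fin 2) ≠ 0), C_add, map_ofNat]
  linear_combination -he

lemma sum_hc (w : R2) (k : ℕ) (h : w.totalDegree ≤ k) :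
    ∑ m ∈ Finset.range (k + 1), homogeneousComponent m w = w := by
  have hs := sum_homogeneousComponent w
  have hsub : Finset.range (w.totalDegree + 1) ⊆ Finset.range (k + 1) :=
    Finset.range_subset_range.mpr (by omega)
  have hz : ∀ m ∈ Finset.range (k + 1), m ∉ Finset.range (w.totalDegree + 1) →
      homogeneousComponent m w = 0 := by
    intro m _ hm
    rw [Finset.mem_range, not_lt] at hm
    exact homogeneousComponent_eq_zero m w (show w.totalDegree < m by omega)
  exact (Finset.sum_subset hsub hz).symm.trans hs

lemma poincare (k : ℕ) (w₁ w₂ : R2) (h1 : w₁.totalDegree ≤ k) (h2 : w₂.totalDegree ≤ k)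
    (hcl : pderiv 1 w₁ = pderiv 0 w₂) :
    ∃ p : R2, p.totalDegree ≤ k + 1 ∧ pderiv 0 p = w₁ ∧ pderiv 1 p = w₂ := by
  set p₁ := integ 0 w₁ with hp₁
  set r := w₂ - pderiv 1 p₁ with hr
  set p₂ := integ 1 r with hp₂
  have hx : pderiv 0 p₁ = w₁ := pderiv_integ 0 w₁
  have hr0 : pderiv 0 r = 0 := by
    rw [hr, map_sub, pderiv_comm', hx, hcl, sub_self]
  have hdp₁ : p₁.totalDegree ≤ k + 1 := totalDegree_integ_le 0 w₁ k h1
  have hdr : r.totalDegree ≤ k := by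
    refine (totalDegree_sub w₂ _).trans (max_le h2 ?_)
    exact totalDegree_pderiv_le 1 p₁ k hdp₁
  refine ⟨p₁ + p₂, ?_, ?_, ?_⟩
  · exact (totalDegree_add p₁ p₂).trans (max_le hdp₁ (totalDegree_integ_le 1 r k hdr))
  · rw [map_add, hx, hp₂, pderiv_integ_other r hr0, add_zero]
  · rw [map_add, hp₂, pderiv_integ 1 r, hr]
    ring

lemma curl_pair (q : R2) : curl2 (X 1 * q, -(X 0 * q)) =
    -(C 2 * q) - (X 0 * pderiv 0 q + X 1 * pderiv 1 q) := by
  unfold curl2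
  simp only [pderiv_mul, pderiv_X_self, map_neg, pderiv_X_of_ne (by decide : (0:Fin 2) ≠ 1),
    pderiv_X_of_ne (by decide : (1:Fin 2) ≠ 0), map_ofNat]
  ring

lemma curl_ned (w₁ w₂ p : R2) (k : ℕ) (hp : p.IsHomogeneous k) :
    curl2 (w₁ + X 1 * p, w₂ - X 0 * p) = curl2 (w₁, w₂) - C ((k : ℝ) + 2) * p := by
  have he := euler p k hp
  unfold curl2
  simp only [map_add, map_sub, pderiv_mul, pderiv_X_self,
    pderiv_X_of_ne (by decide : (0:Fin 2) ≠ 1),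
    pderiv_X_of_ne (by decide : (1:Fin 2) ≠ 0), C_add, map_ofNat]
  linear_combination -he

lemma curl_onto (k : ℕ) (w : R2) (hw : w.totalDegree ≤ k) :
    ∃ v : R2 × R2, memNed2 k v ∧ curl2 v = w := by
  set c : ℕ → ℝ := fun m => -(1 / ((m : ℝ) + 2)) with hc
  set q : R2 := ∑ m ∈ Finset.range (k + 1), C (c m) * homogeneousComponent m w with hq
  set qlow : R2 := ∑ m ∈ Finset.range k, C (c m) * homogeneousComponent m w with hqlow
  have hqsplit : q = qlow + C (c k) * homogeneousComponent k w := Finset.sum_range_succ _ k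
  refine ⟨(X 1 * q, -(X 0 * q)), ?_, ?_⟩
  · refine ⟨X 1 * qlow, -(X 0 * qlow), C (c k) * homogeneousComponent k w, ?_, ?_, ?_, ?_⟩
    · rw [hqlow, Finset.mul_sum]
      refine (totalDegree_finset_sum _ _).trans (Finset.sup_le fun m hm => ?_)
      refine (totalDegree_mul _ _).trans ?_
      have h1 : (X 1 : R2).totalDegree = 1 := totalDegree_X 1
      have h2 : (C (c m) * homogeneousComponent m w).totalDegree ≤ m :=
        ((homogeneousComponent_isHomogeneous m w).C_mul (c m)).totalDegree_le
      rw [Finset.mem_range] at hm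
      omega
    · rw [totalDegree_neg, hqlow, Finset.mul_sum]
      refine (totalDegree_finset_sum _ _).trans (Finset.sup_le fun m hm => ?_)
      refine (totalDegree_mul _ _).trans ?_
      have h1 : (X 0 : R2).totalDegree = 1 := totalDegree_X 0
      have h2 : (C (c m) * homogeneousComponent m w).totalDegree ≤ m :=
        ((homogeneousComponent_isHomogeneous m w).C_mul (c m)).totalDegree_le
      rw [Finset.mem_range] at hm
      omega
    · exact (homogeneousComponent_isHomogeneous k w).C_mul (c k)
    · rw [hqsplit]
      simp only [Prod.mk.injEq]
      constructor <;> ring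
  · have key : X 0 * pderiv 0 q + X 1 * pderiv 1 q =
        ∑ m ∈ Finset.range (k + 1), C (c m) * (C (m : ℝ) * homogeneousComponent m w) := by
      rw [hq, map_sum, map_sum, Finset.mul_sum, Finset.mul_sum, ← Finset.sum_add_distrib]
      refine Finset.sum_congr rfl fun m _ => ?_
      rw [pderiv_C_mul, pderiv_C_mul]
      have he := euler (homogeneousComponent m w) m (homogeneousComponent_isHomogeneous m w)
      linear_combination C (c m) * he
    rw [curl_pair, key, hq, Finset.mul_sum, ← Finset.sum_neg_distrib, ← Finset.sum_sub_distrib]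
    refine Eq.trans ?_ (sum_hc w k hw)
    refine Finset.sum_congr rfl fun m _ => ?_
    have hm2 : ((m : ℝ) + 2) ≠ 0 := by positivity
    have hcoef : (-(2 * c m) - c m * (m : ℝ)) = 1 := by
      rw [hc]
      field_simp
      ring
    calc -(C 2 * (C (c m) * homogeneousComponent m w)) -
          C (c m) * (C (m : ℝ) * homogeneousComponent m w)
        = C (-(2 * c m) - c m * (m : ℝ)) * homogeneousComponent m w := by
          simp only [map_sub, map_neg, map_mul, map_ofNat]
          ring
      _ = homogeneousComponent m w := by rw [hcoef, C_1, one_mul]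


/-- The sequence `𝒫_{k+1} →∇→ 𝐏_k ⊕ 𝐱×𝒫̃_k →∇×→ 𝒫_k` on `ℝ²` is exact:
(i) the kernel of `∇` on `𝒫_{k+1}` consists exactly of the constants;
(ii) `∇𝒫_{k+1} = {v ∈ 𝐏_k ⊕ 𝐱×𝒫̃_k : ∇×v = 0}`;
(iii) `∇×` maps `𝐏_k ⊕ 𝐱×𝒫̃_k` onto `𝒫_k`. -/
theorem stmt_2 (k : ℕ) :
    (∀ p : R2, p.totalDegree ≤ k + 1 → (grad2 p = 0 ↔ ∃ c : ℝ, p = C c)) ∧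
    ({v : R2 × R2 | ∃ p : R2, p.totalDegree ≤ k + 1 ∧ v = grad2 p} =
      {v : R2 × R2 | memNed2 k v ∧ curl2 v = 0}) ∧
    (∀ w : R2, w.totalDegree ≤ k →
      ∃ v : R2 × R2, memNed2 k v ∧ curl2 v = w) := by
  refine ⟨?_, ?_, fun w hw => curl_onto k w hw⟩
  · intro p hp
    constructor
    · intro h
      have h0 : pderiv 0 p = 0 := congrArg Prod.fst h
      have h1 : pderiv 1 p = 0 := congrArg Prod.snd h
      exact ⟨coeff 0 p, grad_zero_const p h0 h1⟩
    · rintro ⟨c, rfl⟩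
      unfold grad2
      rw [pderiv_C, pderiv_C]
      rfl
  · ext v
    simp only [Set.mem_setOf_eq]
    constructor
    · rintro ⟨p, hdeg, rfl⟩
      refine ⟨⟨pderiv 0 p, pderiv 1 p, 0, totalDegree_pderiv_le 0 p k hdeg,
        totalDegree_pderiv_le 1 p k hdeg, isHomogeneous_zero (Fin 2) ℝ k, by simp [grad2]⟩, ?_⟩
      unfold curl2 grad2
      rw [pderiv_comm']
      ring
    · rintro ⟨⟨w₁, w₂, p', hw1, hw2, hp, rfl⟩, hcurl⟩
      rw [curl_ned w₁ w₂ p' k hp] at hcurl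
      have hcw : C ((k : ℝ) + 2) * p' = curl2 (w₁, w₂) := by linear_combination -hcurl
      have hp0 : p' = 0 := by
        ext d
        rw [coeff_zero]
        by_cases hdeg : d.degree = k
        · have hC := congrArg (coeff d) hcw
          rw [coeff_C_mul] at hC
          have hdsum : d.sum (fun _ n => n) = d.degree := rfl
          have hc1 : coeff d (curl2 (w₁, w₂)) = 0 := by
            unfold curl2
            rw [coeff_add, coeff_neg, coeff_pderiv', coeff_pderiv']
            have e1 : coeff (d + Finsupp.single 1 1) w₁ = 0 := by
              apply coeff_eq_zero_of_totalDegree_lt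
              show w₁.totalDegree < (d + Finsupp.single 1 1).degree
              rw [degree_two]
              have hdeg' : d 0 + d 1 = k := by rw [← degree_two]; exact hdeg
              have ha : (d + Finsupp.single 1 1 : Fin 2 →₀ ℕ) 0 = d 0 := by
                simp [Finsupp.single_apply]
              have hb : (d + Finsupp.single 1 1 : Fin 2 →₀ ℕ) 1 = d 1 + 1 := by simp
              omega
            have e2 : coeff (d + Finsupp.single 0 1) w₂ = 0 := by
              apply coeff_eq_zero_of_totalDegree_lt
              show w₂.totalDegree < (d + Finsupp.single 0 1).degree
              rw [degree_two]
              have hdeg' : d 0 + d 1 = k := by rw [← degree_two]; exact hdeg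
              have ha : (d + Finsupp.single 0 1 : Fin 2 →₀ ℕ) 0 = d 0 + 1 := by simp
              have hb : (d + Finsupp.single 0 1 : Fin 2 →₀ ℕ) 1 = d 1 := by
                simp [Finsupp.single_apply]
              omega
            rw [e1, e2]
            ring
          rw [hc1] at hC
          rcases mul_eq_zero.mp hC with h' | h'
          · exact absurd h' (by positivity)
          · exact h'
        · exact hp.coeff_eq_zero hdeg
      have hv : (w₁ + X 1 * p', w₂ - X 0 * p') = (w₁, w₂) := by rw [hp0]; simp
      rw [hp0, mul_zero, sub_zero] at hcurl
      have hcl : pderiv 1 w₁ = pderiv 0 w₂ := by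
        unfold curl2 at hcurl
        linear_combination -hcurl
      obtain ⟨p, hpd, hpx, hpy⟩ := poincare k w₁ w₂ hw1 hw2 hcl
      refine ⟨p, hpd, ?_⟩
      rw [hv]
      unfold grad2
      rw [hpx, hpy]
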